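/- arXiv:2203.10071 — 9 statements merged into one kernel-verified Lean document; each statement's English description precedes it below -/
import Mathlib

section
/- Let G be a simple graph and H=(v_1,...,v_h) an attachment set with h even. Then the special vector s, defined on V(altan(G,H)) by s(y_i)=(-1)^i and s(u)=0 for all other vertices u, is a kernel eigenvector of the adjacency matrix of altan(G,H). In particular the nullity of altan(G,H) is at least 1. -/
open scoped Classical

/-- The nullity of a graph: dimension of the kernel of its real adjacency matrix. -/
noncomputable def nullity {V : Type*} [Fintype V] (G : SimpleGraph V) : ℕ :=
  letI := Classical.decEq V
  letI := Classical.decRel G.Adj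
  Module.finrank ℝ ↥(LinearMap.ker (Matrix.toLin' (G.adjMatrix ℝ)))

/-- `q` is a kernel eigenvector of `G`: the sum of `q` over each neighbourhood is `0`. -/
def IsKernelVector {V : Type*} [Fintype V] (G : SimpleGraph V) (q : V → ℝ) : Prop :=
  ∀ v : V, ∑ u : V, (if G.Adj v u then q u else 0) = 0

/-- Underlying relation of the altan construction: vertices are `V ⊕ (Fin h ⊕ Fin h)`,
where `Sum.inr (Sum.inl i)` is `x_{i+1}` and `Sum.inr (Sum.inr i)` is `y_{i+1}`
(0-indexed versions of the 1-indexed `x_i, y_i`). -/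
def altanRel {V : Type*} {h : ℕ} [NeZero h] (G : SimpleGraph V) (H : Fin h → V) :
    (V ⊕ (Fin h ⊕ Fin h)) → (V ⊕ (Fin h ⊕ Fin h)) → Prop
  | Sum.inl u, Sum.inl w => G.Adj u w
  | Sum.inl u, Sum.inr (Sum.inl i) => u = H i
  | Sum.inr (Sum.inl i), Sum.inr (Sum.inr j) => j = i ∨ i = j + 1
  | _, _ => False

/-- The altan of `(G, H)`. -/
def altan {V : Type*} {h : ℕ} [NeZero h] (G : SimpleGraph V) (H : Fin h → V) :
    SimpleGraph (V ⊕ (Fin h ⊕ Fin h)) :=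
  SimpleGraph.fromRel (altanRel G H)

/-- The special vector: `s(y_i) = (-1)^i` (1-indexed), `0` elsewhere. -/
def specialVector (V : Type*) (h : ℕ) : (V ⊕ (Fin h ⊕ Fin h)) → ℝ
  | Sum.inr (Sum.inr j) => (-1 : ℝ) ^ ((j : ℕ) + 1)
  | _ => 0

/-- The induced attachment set `H' = (y_1, ..., y_h)` of the altan. -/
def inducedAttachment (V : Type*) (h : ℕ) : Fin h → (V ⊕ (Fin h ⊕ Fin h)) :=
  fun i => Sum.inr (Sum.inr i)

private lemma aux_pow_altan {a b : ℕ} (hab : a % 2 ≠ b % 2) : (-1 : ℝ) ^ a + (-1) ^ b = 0 := by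
  rw [neg_one_pow_eq_pow_mod_two, neg_one_pow_eq_pow_mod_two (n := b)]
  rcases Nat.mod_two_eq_zero_or_one a with h1 | h1 <;>
    rcases Nat.mod_two_eq_zero_or_one b with h2 | h2 <;> simp_all

private lemma altan_x_row {V : Type*} [Fintype V] {h : ℕ} [NeZero h] (hh : 2 ≤ h)
    (heven : Even h) (G : SimpleGraph V) (H : Fin h → V) (i : Fin h) :
    ∑ u : V ⊕ (Fin h ⊕ Fin h),
      (if (altan G H).Adj (Sum.inr (Sum.inl i)) u then specialVector V h u else 0) = 0 := by
  rw [Fintype.sum_sum_type, Fintype.sum_sum_type]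
  have h1 : ∀ a : V, (if (altan G H).Adj (Sum.inr (Sum.inl i)) (Sum.inl a)
      then specialVector V h (Sum.inl a) else 0) = 0 := by
    intro a; simp [specialVector]
  have h2 : ∀ a : Fin h, (if (altan G H).Adj (Sum.inr (Sum.inl i)) (Sum.inr (Sum.inl a))
      then specialVector V h (Sum.inr (Sum.inl a)) else 0) = 0 := by
    intro a; simp [specialVector]
  simp only [h1, h2, Finset.sum_const_zero, zero_add, add_zero]
  have h3 : ∀ j : Fin h, (altan G H).Adj (Sum.inr (Sum.inl i)) (Sum.inr (Sum.inr j))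
      ↔ (j = i ∨ j = i - 1) := by
    intro j
    simp only [altan, SimpleGraph.fromRel_adj, altanRel, ne_eq]
    constructor
    · rintro ⟨-, (h | h) | h⟩
      · exact Or.inl h
      · right; rw [eq_sub_iff_add_eq]; exact h.symm
      · exact h.elim
    · rintro (rfl | rfl)
      · exact ⟨by simp, Or.inl (Or.inl rfl)⟩
      · exact ⟨by simp, Or.inl (Or.inr (by rw [sub_add_cancel]))⟩
  have hne : i - 1 ≠ i := by
    intro hcon
    have h10 : (1 : Fin h) = 0 := by
      have := sub_eq_self.mp hcon
      simpa using this
    rw [Fin.one_eq_zero_iff] at h10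
    omega
  have hsplit : ∀ j : Fin h, (if (j = i ∨ j = i - 1) then (-1:ℝ)^((j:ℕ)+1) else 0)
      = (if j = i then (-1:ℝ)^((j:ℕ)+1) else 0) + (if j = i - 1 then (-1:ℝ)^((j:ℕ)+1) else 0) := by
    intro j
    by_cases e1 : j = i <;> by_cases e2 : j = i - 1 <;> simp_all
  have : ∑ j : Fin h, (if (altan G H).Adj (Sum.inr (Sum.inl i)) (Sum.inr (Sum.inr j))
      then specialVector V h (Sum.inr (Sum.inr j)) else 0)
      = (-1:ℝ)^((i:ℕ)+1) + (-1:ℝ)^(((i-1 : Fin h):ℕ)+1) := by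
    simp only [h3, specialVector, hsplit, Finset.sum_add_distrib, Finset.sum_ite_eq',
      Finset.mem_univ, if_true]
  rw [this]
  apply aux_pow_altan
  have hv : ((i - 1 : Fin h) : ℕ) = ((i:ℕ) + (h - 1)) % h := by
    rw [Fin.sub_def]; simp only [Fin.val_one']
    rw [Nat.mod_eq_of_lt hh, Nat.add_comm]
  rw [hv]
  have hm2 := Nat.mod_mod_of_dvd ((i:ℕ) + (h - 1)) heven.two_dvd
  set m := ((i:ℕ) + (h - 1)) % h with hm
  obtain ⟨k, hk⟩ := heven
  have hlt : (i:ℕ) < h := i.isLt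
  omega

/-- for even attachment size, the special vector is a kernel eigenvector of
the altan, so the altan has nullity at least 1. -/
theorem stmt0 {V : Type*} [Fintype V] {h : ℕ} [NeZero h] (hh : 2 ≤ h) (heven : Even h)
    (G : SimpleGraph V) (H : Fin h → V) :
    IsKernelVector (altan G H) (specialVector V h) ∧ 1 ≤ nullity (altan G H) := by
  have hker : IsKernelVector (altan G H) (specialVector V h) := by
    intro v
    match v with
    | Sum.inl u =>
      apply Finset.sum_eq_zero
      intro w _
      match w with
      | Sum.inl a => simp [specialVector]
      | Sum.inr (Sum.inl a) => simp [specialVector]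
      | Sum.inr (Sum.inr j) =>
        simp [altan, SimpleGraph.fromRel_adj, altanRel]
    | Sum.inr (Sum.inr j) =>
      apply Finset.sum_eq_zero
      intro w _
      match w with
      | Sum.inl a => simp [specialVector]
      | Sum.inr (Sum.inl a) => simp [specialVector]
      | Sum.inr (Sum.inr j') =>
        simp [altan, SimpleGraph.fromRel_adj, altanRel]
    | Sum.inr (Sum.inl i) => exact altan_x_row hh heven G H i
  refine ⟨hker, ?_⟩
  unfold nullity
  have hmem : specialVector V h ∈
      LinearMap.ker (Matrix.toLin' ((altan G H).adjMatrix ℝ)) := by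
    rw [LinearMap.mem_ker]
    funext v
    rw [Matrix.toLin'_apply]
    have : ((altan G H).adjMatrix ℝ).mulVec (specialVector V h) v
        = ∑ u, (if (altan G H).Adj v u then specialVector V h u else 0) := by
      simp [Matrix.mulVec, dotProduct, SimpleGraph.adjMatrix_apply, ite_mul]
    rw [this, hker v]
    rfl
  have hnz : specialVector V h ≠ 0 := by
    intro h0
    have := congrFun h0 (Sum.inr (Sum.inr (0 : Fin h)))
    simp [specialVector] at this
  have : Nontrivial ↥(LinearMap.ker (Matrix.toLin' ((altan G H).adjMatrix ℝ))) := by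
    refine ⟨⟨specialVector V h, hmem⟩, 0, ?_⟩
    simp [Submodule.mk_eq_zero, hnz]
  exact Module.finrank_pos_iff.mpr this
end

section
/- Let G be a graph and H an attachment set of size h. Then η(altan(G,H)) ≥ η(G), where η denotes the nullity (dimension of the kernel) of the adjacency matrix. -/
/-!
A kernel vector `q` of `G` extends to the altan by the value `0` on the `x_i` and free values `c`
on the `y_i`. The rows of the old vertices and of the `y_i` then vanish automatically, since the
`y_i` are adjacent only to the `x_i`; the row of `x_i` is one linear condition on `(q, c)`. So the
`h` rows of the `x_i` cut a space of dimension `η(G) + h` down to dimension at least `η(G)`, and the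
extension map is injective.
-/

open scoped Classical

open Matrix Module

lemma nullity_eq_finrank_ker {V : Type*} [Fintype V] (G : SimpleGraph V) [DecidableEq V]
    [DecidableRel G.Adj] : nullity G = finrank ℝ (LinearMap.ker (toLin' (G.adjMatrix ℝ))) := by
  unfold nullity
  congr!

lemma SimpleGraph.adjMatrix_mulVec_apply_eq_sum_ite {W : Type*} [Fintype W] [DecidableEq W]
    (Γ : SimpleGraph W) [DecidableRel Γ.Adj] (f : W → ℝ) (w : W) :
    (Γ.adjMatrix ℝ *ᵥ f) w = ∑ u, if Γ.Adj w u then f u else 0 := by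
  simp [mulVec, dotProduct, adjMatrix_apply, ite_mul]

section ExtendByZero

variable {V X Y : Type*}

def extendByZero (X : Type*) : (V → ℝ) × (Y → ℝ) →ₗ[ℝ] (V ⊕ (X ⊕ Y) → ℝ) where
  toFun p := Sum.elim p.1 (Sum.elim 0 p.2)
  map_add' p p' := by ext (v | x | y) <;> simp
  map_smul' r p := by ext (v | x | y) <;> simp

lemma extendByZero_injective :
    Function.Injective (extendByZero X : (V → ℝ) × (Y → ℝ) →ₗ[ℝ] _) := by
  rintro ⟨q, c⟩ ⟨q', c'⟩ h
  simp only [extendByZero, LinearMap.coe_mk, AddHom.coe_mk] at h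
  ext1
  · exact funext fun v => congrFun h (.inl v)
  · exact funext fun y => congrFun h (.inr (.inr y))

variable [Fintype V] [Fintype X] [Fintype Y] {Γ : SimpleGraph (V ⊕ (X ⊕ Y))} {G : SimpleGraph V}

lemma adjMatrix_mulVec_extendByZero_inl (hV : ∀ v w, Γ.Adj (.inl v) (.inl w) ↔ G.Adj v w)
    (hVY : ∀ v y, ¬ Γ.Adj (.inl v) (.inr (.inr y))) (p : (V → ℝ) × (Y → ℝ)) (v : V) :
    (Γ.adjMatrix ℝ *ᵥ extendByZero X p) (.inl v) = (G.adjMatrix ℝ *ᵥ p.1) v := by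
  rw [SimpleGraph.adjMatrix_mulVec_apply_eq_sum_ite, SimpleGraph.adjMatrix_mulVec_apply_eq_sum_ite]
  simp [Fintype.sum_sum_type, extendByZero, hV, hVY]

lemma adjMatrix_mulVec_extendByZero_inr_inr (hVY : ∀ v y, ¬ Γ.Adj (.inl v) (.inr (.inr y)))
    (hYY : ∀ y y', ¬ Γ.Adj (.inr (.inr y)) (.inr (.inr y'))) (p : (V → ℝ) × (Y → ℝ)) (y : Y) :
    (Γ.adjMatrix ℝ *ᵥ extendByZero X p) (.inr (.inr y)) = 0 := by
  have hYV : ∀ v, ¬ Γ.Adj (.inr (.inr y)) (.inl v) := fun v h => hVY v y h.symm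
  rw [SimpleGraph.adjMatrix_mulVec_apply_eq_sum_ite]
  simp [Fintype.sum_sum_type, extendByZero, hYY, hYV]

end ExtendByZero

theorem nullity_add_card_le_nullity_add_card {V X Y : Type*} [Fintype V] [Fintype X] [Fintype Y]
    {Γ : SimpleGraph (V ⊕ (X ⊕ Y))} {G : SimpleGraph V}
    (hV : ∀ v w, Γ.Adj (.inl v) (.inl w) ↔ G.Adj v w)
    (hVY : ∀ v y, ¬ Γ.Adj (.inl v) (.inr (.inr y)))
    (hYY : ∀ y y', ¬ Γ.Adj (.inr (.inr y)) (.inr (.inr y'))) :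
    nullity G + Fintype.card Y ≤ nullity Γ + Fintype.card X := by
  rw [nullity_eq_finrank_ker, nullity_eq_finrank_ker]
  set K := LinearMap.ker (toLin' (G.adjMatrix ℝ))
  set E := extendByZero X ∘ₗ K.subtype.prodMap (LinearMap.id : (Y → ℝ) →ₗ[ℝ] _)
  set τ := LinearMap.funLeft ℝ ℝ (Sum.inr ∘ Sum.inl : X → V ⊕ (X ⊕ Y)) ∘ₗ
    toLin' (Γ.adjMatrix ℝ) ∘ₗ E
  have hE : ∀ p ∈ LinearMap.ker τ, E p ∈ LinearMap.ker (toLin' (Γ.adjMatrix ℝ)) := by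
    intro p hp
    rw [LinearMap.mem_ker, toLin'_apply]
    funext w
    rcases w with v | x | y
    · exact (adjMatrix_mulVec_extendByZero_inl hV hVY _ v).trans (congrFun p.1.2 v)
    · exact congrFun hp x
    · exact adjMatrix_mulVec_extendByZero_inr_inr hVY hYY _ y
  have hE_inj : Function.Injective (E.restrict hE) := fun a b hab =>
    Subtype.ext <| extendByZero_injective.comp (Subtype.val_injective.prodMap Function.injective_id)
      (congrArg Subtype.val hab)
  have h_rank := τ.finrank_range_add_finrank_ker
  have h_range : finrank ℝ (LinearMap.range τ) ≤ Fintype.card X :=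
    (Submodule.finrank_le _).trans (finrank_fintype_fun_eq_card ℝ).le
  have h_ker := LinearMap.finrank_le_finrank_of_injective hE_inj
  rw [finrank_prod, finrank_fintype_fun_eq_card] at h_rank
  omega

section Altan

variable {V : Type*} {h : ℕ} [NeZero h] (G : SimpleGraph V) (H : Fin h → V)

lemma altan_adj_inl_inl (u w : V) : (altan G H).Adj (.inl u) (.inl w) ↔ G.Adj u w := by
  simp only [altan, SimpleGraph.fromRel_adj, altanRel, ne_eq, Sum.inl.injEq]
  exact ⟨fun ⟨_, hr⟩ => hr.elim id .symm, fun hr => ⟨G.ne_of_adj hr, .inl hr⟩⟩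

lemma altan_not_adj_inl_inr_inr (u : V) (j : Fin h) :
    ¬ (altan G H).Adj (.inl u) (.inr (.inr j)) := by
  simp [altan, altanRel]

lemma altan_not_adj_inr_inr (i j : Fin h) :
    ¬ (altan G H).Adj (.inr (.inr i)) (.inr (.inr j)) := by
  simp [altan, altanRel]

end Altan

theorem stmt1_general {V : Type*} [Fintype V] {h : ℕ} [NeZero h]
    (G : SimpleGraph V) (H : Fin h → V) :
    nullity G ≤ nullity (altan G H) := by
  have key := nullity_add_card_le_nullity_add_card (altan_adj_inl_inl G H)
    (altan_not_adj_inl_inr_inr G H) (altan_not_adj_inr_inr G H)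
  simpa only [Fintype.card_fin, add_le_add_iff_right] using key

/-- the nullity of the altan is at least the nullity of the parent. -/
theorem stmt1 {V : Type*} [Fintype V] {h : ℕ} [NeZero h] (hh : 2 ≤ h)
    (G : SimpleGraph V) (H : Fin h → V) :
    nullity G ≤ nullity (altan G H) :=
  stmt1_general G H
end

section
/- Let G be a graph and H an attachment set of odd size h. Then η(altan(G,H)) = η(G). -/
open scoped Classical

/-!
Let `f` be a kernel vector of the altan. Its equation at `y_i` reads `f(x_i) + f(x_{i+1}) = 0`
and its equation at `x_i` reads `f(v_i) + f(y_i) + f(y_{i-1}) = 0`. For odd `h` the operator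
`I + P` on `ℝ^h`, with `P` the cyclic shift, is injective (an alternating sequence around an odd
cycle vanishes), hence invertible. So `f` vanishes on the `x`'s, its restriction to `G` is a kernel
vector of `G`, and conversely every kernel vector of `G` extends uniquely by solving
`(I + P) f_y = -f ∘ H`. Restriction to `G` is therefore an isomorphism of kernels.
-/

lemma Fintype.sum_ite_eq_or_eq {ι M : Type*} [Fintype ι] [DecidableEq ι] [AddCommMonoid M]
    {i k : ι} (hik : i ≠ k) (b : ι → M) :
    ∑ j, (if j = i ∨ j = k then b j else 0) = b i + b k := by
  rw [← Finset.sum_filter, Finset.filter_or, Finset.filter_eq', Finset.filter_eq']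
  simp [Finset.sum_pair hik]

namespace Fin

open scoped Fin.NatCast Fin.CommRing

variable {h : ℕ} [NeZero h]

lemma add_one_ne_self_of_two_le (hh : 2 ≤ h) (i : Fin h) : i + 1 ≠ i := by
  intro e
  have : ((1 : Fin h) : ℕ) = 0 := by rw [← Fin.val_zero h, ← add_eq_left.mp e]
  rw [Fin.val_one', Nat.mod_eq_of_lt (by omega)] at this
  exact one_ne_zero this

variable {K : Type*} [Field K]

-- `x_i` is adjacent to `y_i` and `y_{i-1}`: this is the biadjacency operator from the `y`'s
-- to the `x`'s in the altan.
def addPrev : (Fin h → K) →ₗ[K] (Fin h → K) :=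
  LinearMap.id + LinearMap.funLeft K K (fun i => i - 1)

@[simp] lemma addPrev_apply (a : Fin h → K) (i : Fin h) : addPrev a i = a i + a (i - 1) := rfl

lemma addPrev_injective [NeZero (2 : K)] (hodd : Odd h) :
    Function.Injective (addPrev : (Fin h → K) →ₗ[K] (Fin h → K)) := by
  rw [← LinearMap.ker_eq_bot, LinearMap.ker_eq_bot']
  intro a ha
  have hsucc (i : Fin h) : a (i + 1) = -a i := by
    simpa [eq_neg_iff_add_eq_zero] using congrFun ha (i + 1)
  have hpow (n : ℕ) : a n = (-1) ^ n * a 0 := by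
    induction n with
    | zero => simp
    | succ n ih => rw [Nat.cast_succ, hsucc, ih, pow_succ]; ring
  have h0 : a 0 = 0 := by
    have := hpow h
    rw [Fin.natCast_self, hodd.neg_one_pow] at this
    have h2 : (2 : K) * a 0 = 0 := by linear_combination this
    exact (mul_eq_zero.mp h2).resolve_left two_ne_zero
  funext i
  rw [← Fin.cast_val_eq_self i, hpow, h0, mul_zero, Pi.zero_apply]

lemma addPrev_bijective [NeZero (2 : K)] (hodd : Odd h) :
    Function.Bijective (addPrev : (Fin h → K) →ₗ[K] (Fin h → K)) :=
  ⟨addPrev_injective hodd, LinearMap.injective_iff_surjective.mp (addPrev_injective hodd)⟩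

end Fin

namespace SimpleGraph

variable {V : Type*} {h : ℕ} [NeZero h] (G : SimpleGraph V) (H : Fin h → V)

@[simp] lemma altan_adj_inl_inl (v w : V) :
    (altan G H).Adj (Sum.inl v) (Sum.inl w) ↔ G.Adj v w := by
  simp only [altan, fromRel_adj, altanRel, ne_eq, Sum.inl.injEq]
  exact ⟨fun ⟨_, hvw⟩ => hvw.elim id fun h => h.symm, fun hvw => ⟨hvw.ne, .inl hvw⟩⟩

@[simp] lemma altan_adj_inl_x (v : V) (i : Fin h) :
    (altan G H).Adj (Sum.inl v) (Sum.inr (Sum.inl i)) ↔ v = H i := by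
  simp [altan, altanRel]

@[simp] lemma altan_adj_x_inl (v : V) (i : Fin h) :
    (altan G H).Adj (Sum.inr (Sum.inl i)) (Sum.inl v) ↔ v = H i := by
  simp [altan, altanRel]

@[simp] lemma altan_adj_x_y (i j : Fin h) :
    (altan G H).Adj (Sum.inr (Sum.inl i)) (Sum.inr (Sum.inr j)) ↔ j = i ∨ i = j + 1 := by
  simp [altan, altanRel]

@[simp] lemma altan_adj_y_x (i j : Fin h) :
    (altan G H).Adj (Sum.inr (Sum.inr j)) (Sum.inr (Sum.inl i)) ↔ j = i ∨ i = j + 1 := by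
  simp [altan, altanRel]

@[simp] lemma not_altan_adj_inl_y (v : V) (j : Fin h) :
    ¬ (altan G H).Adj (Sum.inl v) (Sum.inr (Sum.inr j)) := by
  simp [altan, altanRel]

@[simp] lemma not_altan_adj_y_inl (v : V) (j : Fin h) :
    ¬ (altan G H).Adj (Sum.inr (Sum.inr j)) (Sum.inl v) := by
  simp [altan, altanRel]

@[simp] lemma not_altan_adj_x_x (i i' : Fin h) :
    ¬ (altan G H).Adj (Sum.inr (Sum.inl i)) (Sum.inr (Sum.inl i')) := by
  simp [altan, altanRel]

@[simp] lemma not_altan_adj_y_y (j j' : Fin h) :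
    ¬ (altan G H).Adj (Sum.inr (Sum.inr j)) (Sum.inr (Sum.inr j')) := by
  simp [altan, altanRel]

lemma mem_ker_toLin'_adjMatrix_iff {W : Type*} [Fintype W] [DecidableEq W] (G : SimpleGraph W)
    [DecidableRel G.Adj] (f : W → ℝ) :
    f ∈ LinearMap.ker (Matrix.toLin' (G.adjMatrix ℝ)) ↔ IsKernelVector G f := by
  simp only [LinearMap.mem_ker, Matrix.toLin'_apply, funext_iff, Pi.zero_apply, IsKernelVector]
  refine forall_congr' fun w => ?_
  simp only [Matrix.mulVec, dotProduct, adjMatrix_apply, ite_mul, one_mul, zero_mul]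
  convert Iff.rfl

variable [Fintype V]

lemma altan_sum_adj_inl (f : V ⊕ (Fin h ⊕ Fin h) → ℝ) (v : V) :
    ∑ u, (if (altan G H).Adj (Sum.inl v) u then f u else 0) =
      ∑ w, (if G.Adj v w then f (Sum.inl w) else 0) +
        ∑ i, (if v = H i then f (Sum.inr (Sum.inl i)) else 0) := by
  simp [Fintype.sum_sum_type]

open scoped Fin.NatCast Fin.CommRing in
lemma altan_sum_adj_x (hh : 2 ≤ h) (f : V ⊕ (Fin h ⊕ Fin h) → ℝ) (i : Fin h) :
    ∑ u, (if (altan G H).Adj (Sum.inr (Sum.inl i)) u then f u else 0) =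
      f (Sum.inl (H i)) + Fin.addPrev (f ∘ Sum.inr ∘ Sum.inr) i := by
  have hne : i ≠ i - 1 := fun e =>
    Fin.add_one_ne_self_of_two_le hh (i - 1) (by rw [sub_add_cancel]; exact e)
  have hcond (j : Fin h) : (j = i ∨ i = j + 1) ↔ (j = i ∨ j = i - 1) := by
    rw [eq_sub_iff_add_eq, @eq_comm _ i (j + 1)]
  simp [Fintype.sum_sum_type, hcond, Fintype.sum_ite_eq_or_eq hne]

open scoped Fin.NatCast Fin.CommRing in
lemma altan_sum_adj_y (hh : 2 ≤ h) (f : V ⊕ (Fin h ⊕ Fin h) → ℝ) (j : Fin h) :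
    ∑ u, (if (altan G H).Adj (Sum.inr (Sum.inr j)) u then f u else 0) =
      Fin.addPrev (f ∘ Sum.inr ∘ Sum.inl) (j + 1) := by
  have hne : j + 1 ≠ j := Fin.add_one_ne_self_of_two_le hh j
  have hcond (i : Fin h) : (j = i ∨ i = j + 1) ↔ (i = j + 1 ∨ i = j) := by
    rw [eq_comm, or_comm]
  simp [Fintype.sum_sum_type, hcond, Fintype.sum_ite_eq_or_eq hne]

lemma isKernelVector_altan_iff (hh : 2 ≤ h) (hodd : Odd h) (f : V ⊕ (Fin h ⊕ Fin h) → ℝ) :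
    IsKernelVector (altan G H) f ↔
      IsKernelVector G (f ∘ Sum.inl) ∧
        Fin.addPrev (f ∘ Sum.inr ∘ Sum.inr) = -(f ∘ Sum.inl ∘ H) ∧ f ∘ Sum.inr ∘ Sum.inl = 0 := by
  have hyRows : (∀ j : Fin h, Fin.addPrev (f ∘ Sum.inr ∘ Sum.inl) (j + 1) = 0) ↔
      f ∘ Sum.inr ∘ Sum.inl = 0 := by
    refine ⟨fun hy => Fin.addPrev_injective hodd ?_, fun hx j => by simp [hx]⟩
    ext i
    simpa using hy (i - 1)
  have hxRows : (∀ i, f (Sum.inl (H i)) + Fin.addPrev (f ∘ Sum.inr ∘ Sum.inr) i = 0) ↔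
      Fin.addPrev (f ∘ Sum.inr ∘ Sum.inr) = -(f ∘ Sum.inl ∘ H) := by
    rw [eq_neg_iff_add_eq_zero, add_comm, funext_iff]
    rfl
  simp only [IsKernelVector, Sum.forall, altan_sum_adj_inl, altan_sum_adj_x G H hh,
    altan_sum_adj_y G H hh, hyRows, hxRows]
  refine and_congr_left fun ⟨_, hx⟩ => forall_congr' fun v => ?_
  simp [show ∀ i, f (Sum.inr (Sum.inl i)) = 0 from congrFun hx]

section Kernel

variable [DecidableEq V] [DecidableRel G.Adj] [DecidableEq (V ⊕ (Fin h ⊕ Fin h))]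
  [DecidableRel (altan G H).Adj]

lemma comp_inl_mem_ker_of_mem_ker_altan (hh : 2 ≤ h) (hodd : Odd h)
    {f : V ⊕ (Fin h ⊕ Fin h) → ℝ}
    (hf : f ∈ LinearMap.ker (Matrix.toLin' ((altan G H).adjMatrix ℝ))) :
    f ∘ Sum.inl ∈ LinearMap.ker (Matrix.toLin' (G.adjMatrix ℝ)) := by
  rw [mem_ker_toLin'_adjMatrix_iff] at hf ⊢
  exact ((isKernelVector_altan_iff G H hh hodd f).mp hf).1

noncomputable def kerAltanRestrict (hh : 2 ≤ h) (hodd : Odd h) :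
    LinearMap.ker (Matrix.toLin' ((altan G H).adjMatrix ℝ)) →ₗ[ℝ]
      LinearMap.ker (Matrix.toLin' (G.adjMatrix ℝ)) :=
  ((LinearMap.funLeft ℝ ℝ Sum.inl).comp (LinearMap.ker _).subtype).codRestrict _
    fun f => comp_inl_mem_ker_of_mem_ker_altan G H hh hodd f.2

lemma kerAltanRestrict_bijective (hh : 2 ≤ h) (hodd : Odd h) :
    Function.Bijective (kerAltanRestrict G H hh hodd) := by
  constructor
  · rw [injective_iff_map_eq_zero]
    rintro ⟨f, hf⟩ hf0
    have hV : f ∘ Sum.inl = 0 := congrArg Subtype.val hf0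
    rw [mem_ker_toLin'_adjMatrix_iff, isKernelVector_altan_iff G H hh hodd] at hf
    obtain ⟨-, hy, hx⟩ := hf
    have hy : f ∘ Sum.inr ∘ Sum.inr = 0 :=
      Fin.addPrev_injective hodd (by rw [hy, map_zero, ← Function.comp_assoc, hV]; simp)
    ext (v | i | j)
    exacts [congrFun hV v, congrFun hx i, congrFun hy j]
  · rintro ⟨q, hq⟩
    obtain ⟨b, hb⟩ := (Fin.addPrev_bijective hodd).surjective (-(q ∘ H))
    refine ⟨⟨Sum.elim q (Sum.elim 0 b), ?_⟩, rfl⟩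
    rw [mem_ker_toLin'_adjMatrix_iff] at hq ⊢
    exact (isKernelVector_altan_iff G H hh hodd _).mpr ⟨hq, hb, rfl⟩

end Kernel

end SimpleGraph

/-- for odd attachment size, the altan has the same nullity as the parent. -/
theorem stmt2 {V : Type*} [Fintype V] {h : ℕ} [NeZero h] (hh : 2 ≤ h) (hodd : Odd h)
    (G : SimpleGraph V) (H : Fin h → V) :
    nullity (altan G H) = nullity G :=
  (LinearEquiv.ofBijective _ (SimpleGraph.kerAltanRestrict_bijective G H hh hodd)).finrank_eq
end

section
/- Let (G',H') = altan(G,H) be the altan of a graph G with attachment set H of odd size h, and let q be a kernel eigenvector of the adjacency matrix of G'. Then q(x_i) = 0 for all 1 ≤ i ≤ h (where x_1,...,x_h are the degree-3 vertices of the added perimeter cycle). -/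
/-!
At `y_j` the kernel condition reads `q(x_j) + q(x_{j+1}) = 0`, since the only neighbours of `y_j`
are `x_j` and `x_{j+1}`. So `q` alternates in sign along the perimeter cycle `x_1, …, x_h`, and
going once around a cycle of odd length gives `q(x_i) = -q(x_i)`.
-/

open scoped Classical

section OddCycle

variable {M : Type*} [AddCommGroup M] {h : ℕ} [NeZero h] {f : Fin h → M}

open Fin.NatCast in
theorem Fin.apply_add_natCast_eq_neg_one_pow_zsmul (hf : ∀ j, f j + f (j + 1) = 0)
    (k : ℕ) (j : Fin h) : f (j + k) = (-1 : ℤ) ^ k • f j := by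
  induction k with
  | zero => simp
  | succ k ih =>
    rw [Nat.cast_succ, ← add_assoc, eq_neg_of_add_eq_zero_right (hf _), ih, pow_succ,
      mul_neg_one, neg_smul]

theorem Fin.eq_zero_of_odd_of_add_succ_eq_zero [IsAddTorsionFree M] (hodd : Odd h)
    (hf : ∀ j, f j + f (j + 1) = 0) (j : Fin h) : f j = 0 := by
  have hperiod := Fin.apply_add_natCast_eq_neg_one_pow_zsmul hf h j
  rwa [Fin.natCast_self, add_zero, hodd.neg_one_pow, neg_one_zsmul, self_eq_neg] at hperiod

end OddCycle

section Altan

variable {V : Type*} {h : ℕ} [NeZero h] (G : SimpleGraph V) (H : Fin h → V)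

theorem altan_adj_inr_inr_iff (j : Fin h) (v : V ⊕ (Fin h ⊕ Fin h)) :
    (altan G H).Adj (.inr (.inr j)) v ↔ ∃ i, v = .inr (.inl i) ∧ (i = j ∨ i = j + 1) := by
  rcases v with u | i | i <;> simp [altan, altanRel, eq_comm]

theorem IsKernelVector.altan_perimeter_add_succ [Fintype V] {q : V ⊕ (Fin h ⊕ Fin h) → ℝ}
    (hq : IsKernelVector (altan G H) q) (j : Fin h) :
    q (.inr (.inl j)) + q (.inr (.inl (j + 1))) = 0 := by
  have hy := hq (.inr (.inr j))
  simp only [altan_adj_inr_inr_iff, Fintype.sum_sum_type, Sum.inr.injEq, Sum.inl.injEq,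
    reduceCtorEq, false_and, exists_eq_left', exists_false, if_false, Finset.sum_const_zero,
    zero_add, add_zero] at hy
  have hneighbours : ({i | i = j ∨ i = j + 1} : Finset (Fin h)) = {j, j + 1} := by
    ext; simp
  rw [← Finset.sum_filter, hneighbours] at hy
  by_cases hj : j = j + 1
  · rw [← hj] at hy ⊢
    simp only [Finset.mem_singleton, Finset.insert_eq_of_mem, Finset.sum_singleton] at hy
    rw [hy, add_zero]
  · rwa [Finset.sum_pair hj] at hy

end Altan

theorem stmt5_general {V : Type*} [Fintype V] {h : ℕ} [NeZero h] (hodd : Odd h)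
    (G : SimpleGraph V) (H : Fin h → V) (q : (V ⊕ (Fin h ⊕ Fin h)) → ℝ)
    (hq : IsKernelVector (altan G H) q) :
    ∀ i : Fin h, q (Sum.inr (Sum.inl i)) = 0 :=
  Fin.eq_zero_of_odd_of_add_succ_eq_zero hodd (hq.altan_perimeter_add_succ G H)

/-- for odd attachment size, every kernel eigenvector of the altan vanishes
on all perimeter vertices x_1, ..., x_h. -/
theorem stmt5 {V : Type*} [Fintype V] {h : ℕ} [NeZero h] (hh : 2 ≤ h) (hodd : Odd h)
    (G : SimpleGraph V) (H : Fin h → V) (q : (V ⊕ (Fin h ⊕ Fin h)) → ℝ)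
    (hq : IsKernelVector (altan G H) q) :
    ∀ i : Fin h, q (Sum.inr (Sum.inl i)) = 0 :=
  stmt5_general hodd G H q hq
end

section
/- Let (G',H') = altan(G,H) with |H| = h odd, and let q be a kernel eigenvector of G' such that q vanishes on all vertices of G and on all perimeter vertices x_1,...,x_h. Then q also vanishes on all perimeter vertices y_1,...,y_h, hence q = 0. -/
open scoped Classical

/-! At the perimeter vertex `x_{j+1}` the kernel equation, once `q` vanishes on `G` and on the
`x_i`, reads `q(y_j) + q(y_{j+1}) = 0`. So `q` alternates in sign along the cycle `y_1, …, y_h`,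
and since `h` is odd, going once around it gives `q(y_1) = -q(y_1)`. -/

namespace Fin

open Fin.NatCast

variable {M : Type*} [AddCommGroup M] {h : ℕ} [NeZero h] {f : Fin h → M}

theorem eq_neg_of_sum_pair_add_one_eq_zero {j : Fin h} (hf : ∑ k ∈ {j, j + 1}, f k = 0) :
    f (j + 1) = -f j := by
  by_cases hj : j = j + 1
  · rw [← hj] at hf ⊢
    simp only [Finset.mem_singleton, Finset.insert_eq_of_mem, Finset.sum_singleton] at hf
    rw [hf, neg_zero]
  · rw [Finset.sum_pair hj] at hf
    exact eq_neg_of_add_eq_zero_right hf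

theorem apply_natCast_eq_neg_one_pow_smul (hf : ∀ j, f (j + 1) = -f j) (n : ℕ) :
    f n = (-1 : ℤ) ^ n • f 0 := by
  induction n with
  | zero => simp
  | succ n ih => rw [Nat.cast_succ, hf, ih, pow_succ, mul_neg_one, neg_smul]

theorem eq_zero_of_apply_add_one_eq_neg [IsAddTorsionFree M] (hodd : Odd h)
    (hf : ∀ j, f (j + 1) = -f j) : f = 0 := by
  have hf0 : f 0 = 0 := by
    have := apply_natCast_eq_neg_one_pow_smul hf h
    rwa [natCast_self, hodd.neg_one_pow, neg_one_smul, self_eq_neg] at this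
  funext i
  rw [← cast_val_eq_self i, apply_natCast_eq_neg_one_pow_smul hf, hf0, smul_zero, Pi.zero_apply]

end Fin

section Altan

variable {V : Type*} {h : ℕ} [NeZero h] {G : SimpleGraph V} {H : Fin h → V}

theorem altan_adj_inr_inl_add_one_inr_inr (j k : Fin h) :
    (altan G H).Adj (Sum.inr (Sum.inl (j + 1))) (Sum.inr (Sum.inr k)) ↔ k = j ∨ k = j + 1 := by
  simp [altan, altanRel, eq_comm, or_comm]

theorem IsKernelVector.altan_sum_pair_eq_zero [Fintype V] {q : V ⊕ (Fin h ⊕ Fin h) → ℝ}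
    (hq : IsKernelVector (altan G H) q) (hV : ∀ u, q (Sum.inl u) = 0)
    (hx : ∀ i, q (Sum.inr (Sum.inl i)) = 0) (j : Fin h) :
    ∑ k ∈ {j, j + 1}, q (Sum.inr (Sum.inr k)) = 0 := by
  have := hq (Sum.inr (Sum.inl (j + 1)))
  simp only [Fintype.sum_sum_type, hV, hx, ite_self, Finset.sum_const_zero, zero_add,
    altan_adj_inr_inl_add_one_inr_inr] at this
  rw [← this, ← Fintype.sum_ite_mem]
  simp only [Finset.mem_insert, Finset.mem_singleton]

end Altan

theorem stmt6_general {V : Type*} [Fintype V] {h : ℕ} [NeZero h] (hodd : Odd h)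
    (G : SimpleGraph V) (H : Fin h → V) (q : (V ⊕ (Fin h ⊕ Fin h)) → ℝ)
    (hq : IsKernelVector (altan G H) q)
    (hV : ∀ u : V, q (Sum.inl u) = 0)
    (hx : ∀ i : Fin h, q (Sum.inr (Sum.inl i)) = 0) :
    (∀ i : Fin h, q (Sum.inr (Sum.inr i)) = 0) ∧ q = 0 := by
  have hy : ∀ i : Fin h, q (Sum.inr (Sum.inr i)) = 0 :=
    congrFun <| Fin.eq_zero_of_apply_add_one_eq_neg hodd fun j ↦
      Fin.eq_neg_of_sum_pair_add_one_eq_zero (hq.altan_sum_pair_eq_zero hV hx j)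
  refine ⟨hy, funext ?_⟩
  rintro (u | i | i)
  exacts [hV u, hx i, hy i]

/-- for odd attachment size, a kernel eigenvector of the altan vanishing on
`V(G)` and on all `x_i` also vanishes on all `y_i`, hence is zero. -/
theorem stmt6 {V : Type*} [Fintype V] {h : ℕ} [NeZero h] (hh : 2 ≤ h) (hodd : Odd h)
    (G : SimpleGraph V) (H : Fin h → V) (q : (V ⊕ (Fin h ⊕ Fin h)) → ℝ)
    (hq : IsKernelVector (altan G H) q)
    (hV : ∀ u : V, q (Sum.inl u) = 0)
    (hx : ∀ i : Fin h, q (Sum.inr (Sum.inl i)) = 0) :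
    (∀ i : Fin h, q (Sum.inr (Sum.inr i)) = 0) ∧ q = 0 :=
  stmt6_general hodd G H q hq hV hx
end

section
/- Let (G',H') = altan(G,H) with |H| = h even, and let q be a kernel eigenvector of the adjacency matrix of G'. Then q(x_i) = q(x_1) for all odd i and q(x_i) = -q(x_1) for all even i, i.e., the values of q on the perimeter vertices x_1,...,x_h alternate in sign. -/
open scoped Classical

/-- for even attachment size, a kernel eigenvector of the altan alternates in
sign on the perimeter vertices `x_i`: `q(x_i) = (-1)^(i-1) q(x_1)` (`0`-indexed below). -/
theorem stmt7 {V : Type*} [Fintype V] {h : ℕ} [NeZero h] (hh : 2 ≤ h) (heven : Even h)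
    (G : SimpleGraph V) (H : Fin h → V) (q : (V ⊕ (Fin h ⊕ Fin h)) → ℝ)
    (hq : IsKernelVector (altan G H) q) :
    ∀ i : Fin h, q (Sum.inr (Sum.inl i)) = (-1 : ℝ) ^ (i : ℕ) * q (Sum.inr (Sum.inl 0)) := by
  have h1h : (1 : ℕ) % h = 1 := Nat.mod_eq_of_lt (by omega)
  have hne : ∀ j : Fin h, j ≠ j + 1 := by
    intro j hj
    have h2 := congrArg Fin.val hj
    simp only [Fin.add_def, Fin.val_one', h1h, Fin.val_mk] at h2
    have hlt := j.isLt
    rcases Nat.lt_or_ge ((j : ℕ) + 1) h with hc | hc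
    · rw [Nat.mod_eq_of_lt hc] at h2; omega
    · have he : (j : ℕ) + 1 = h := by omega
      rw [he, Nat.mod_self] at h2
      omega
  have key : ∀ j : Fin h, q (Sum.inr (Sum.inl (j + 1))) = - q (Sum.inr (Sum.inl j)) := by
    intro j
    have hsum := hq (Sum.inr (Sum.inr j))
    rw [Fintype.sum_sum_type] at hsum
    have h1 : ∀ u : V, (if (altan G H).Adj (Sum.inr (Sum.inr j)) (Sum.inl u)
        then q (Sum.inl u) else 0) = 0 := by
      intro u; simp [altan, altanRel, SimpleGraph.fromRel_adj]
    rw [Finset.sum_congr rfl (fun u _ => h1 u), Finset.sum_const_zero, zero_add,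
      Fintype.sum_sum_type] at hsum
    have h2 : ∀ k : Fin h, (if (altan G H).Adj (Sum.inr (Sum.inr j)) (Sum.inr (Sum.inr k))
        then q (Sum.inr (Sum.inr k)) else 0) = 0 := by
      intro k; simp [altan, altanRel, SimpleGraph.fromRel_adj]
    rw [Finset.sum_congr rfl (fun k _ => h2 k), Finset.sum_const_zero, add_zero] at hsum
    have h3 : ∀ i : Fin h, (if (altan G H).Adj (Sum.inr (Sum.inr j)) (Sum.inr (Sum.inl i))
        then q (Sum.inr (Sum.inl i)) else 0)
        = (if i = j then q (Sum.inr (Sum.inl i)) else 0)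
          + (if i = j + 1 then q (Sum.inr (Sum.inl i)) else 0) := by
      intro i
      have hadj : (altan G H).Adj (Sum.inr (Sum.inr j)) (Sum.inr (Sum.inl i)) ↔
          (i = j ∨ i = j + 1) := by
        simp [altan, altanRel, SimpleGraph.fromRel_adj, eq_comm]
      rw [hadj]
      by_cases e1 : i = j <;> by_cases e2 : i = j + 1 <;>
        simp_all [hne j]
    rw [Finset.sum_congr rfl (fun i _ => h3 i), Finset.sum_add_distrib,
      Finset.sum_ite_eq' Finset.univ j, Finset.sum_ite_eq' Finset.univ (j + 1)] at hsum
    simp only [Finset.mem_univ, if_true] at hsum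
    linarith
  have main : ∀ n (hn : n < h),
      q (Sum.inr (Sum.inl ⟨n, hn⟩)) = (-1 : ℝ) ^ n * q (Sum.inr (Sum.inl 0)) := by
    intro n
    induction n with
    | zero =>
        intro hn
        have : (⟨0, hn⟩ : Fin h) = 0 := rfl
        rw [this]; simp
    | succ n ih =>
        intro hn
        have hn' : n < h := Nat.lt_of_succ_lt hn
        have hstep : (⟨n + 1, hn⟩ : Fin h) = ⟨n, hn'⟩ + 1 := by
          simp only [Fin.ext_iff, Fin.add_def, Fin.val_one', h1h, Fin.val_mk]
          rw [Nat.mod_eq_of_lt hn]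
        rw [hstep, key ⟨n, hn'⟩, ih hn']
        ring
  intro i
  have : i = ⟨(i : ℕ), i.isLt⟩ := rfl
  rw [this, main (i : ℕ) i.isLt]
end

section
/- Let (G',H') = altan(G,H) with |H| = h even, and let q be a kernel eigenvector of G' vanishing on all vertices of G and on all perimeter vertices x_1,...,x_h. Then q(y_i) = q(y_1) for all odd i and q(y_i) = -q(y_1) for all even i; in particular q is a scalar multiple of the special vector. -/
open scoped Classical

/-!
Once `q` vanishes on `G` and on the perimeter, the kernel condition at `x_{i+1}` reads
`q(y_i) + q(y_{i+1}) = 0`, so consecutive values of `q` along `y_1, …, y_h` are opposite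
and `q` is alternating on the `y`'s, i.e. a multiple of the special vector.
-/

theorem Fin.eq_neg_one_pow_mul_of_succ_eq_neg {R : Type*} [Ring R] {n : ℕ} {a : Fin (n + 1) → R}
    (ha : ∀ i : Fin n, a i.succ = -a i.castSucc) (i : Fin (n + 1)) :
    a i = (-1) ^ (i : ℕ) * a 0 := by
  induction i using Fin.induction with
  | zero => simp
  | succ i ih => rw [ha, ih, Fin.val_succ, pow_succ]; noncomm_ring

open Sum

section Altan

variable {V : Type*} {h : ℕ} [NeZero h] {G : SimpleGraph V} {H : Fin h → V}

theorem altan_adj_perimeter_iff (i j : Fin h) :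
    (altan G H).Adj (inr (inl i)) (inr (inr j)) ↔ j = i ∨ i = j + 1 := by
  simp [altan, altanRel]

variable [Fintype V] {q : (V ⊕ (Fin h ⊕ Fin h)) → ℝ}

theorem IsKernelVector.altan_sum_perimeter (hq : IsKernelVector (altan G H) q)
    (hV : ∀ u : V, q (inl u) = 0) (hx : ∀ i : Fin h, q (inr (inl i)) = 0) (i : Fin h) :
    ∑ j : Fin h, (if j = i ∨ i = j + 1 then q (inr (inr j)) else 0) = 0 := by
  have hi := hq (inr (inl i))
  simp only [Fintype.sum_sum_type, hV, hx, altan_adj_perimeter_iff, ite_self,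
    Finset.sum_const_zero, zero_add] at hi
  exact hi

theorem IsKernelVector.altan_succ_eq_neg (hq : IsKernelVector (altan G H) q)
    (hV : ∀ u : V, q (inl u) = 0) (hx : ∀ i : Fin h, q (inr (inl i)) = 0) (j : Fin h)
    (hj : j + 1 ≠ j) :
    q (inr (inr (j + 1))) = -q (inr (inr j)) := by
  have hnbhd : Finset.univ.filter (fun k => k = j + 1 ∨ j + 1 = k + 1) = {j + 1, j} := by
    ext k
    simp [eq_comm (a := j) (b := k)]
  have hsum := hq.altan_sum_perimeter hV hx (j + 1)
  rw [← Finset.sum_filter, hnbhd, Finset.sum_pair hj] at hsum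
  linarith

theorem IsKernelVector.altan_eq_neg_one_pow_mul (hq : IsKernelVector (altan G H) q)
    (hV : ∀ u : V, q (inl u) = 0) (hx : ∀ i : Fin h, q (inr (inl i)) = 0) (i : Fin h) :
    q (inr (inr i)) = (-1) ^ (i : ℕ) * q (inr (inr 0)) := by
  obtain ⟨n, rfl⟩ := Nat.exists_eq_succ_of_ne_zero (NeZero.ne h)
  refine Fin.eq_neg_one_pow_mul_of_succ_eq_neg (a := fun i => q (inr (inr i))) (fun i => ?_) i
  rw [← Fin.coeSucc_eq_succ]
  refine hq.altan_succ_eq_neg hV hx _ fun heq => ?_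
  simpa using congrArg Fin.val heq

end Altan

theorem stmt8_general {V : Type*} [Fintype V] {h : ℕ} [NeZero h]
    (G : SimpleGraph V) (H : Fin h → V) (q : (V ⊕ (Fin h ⊕ Fin h)) → ℝ)
    (hq : IsKernelVector (altan G H) q)
    (hV : ∀ u : V, q (Sum.inl u) = 0)
    (hx : ∀ i : Fin h, q (Sum.inr (Sum.inl i)) = 0) :
    (∀ i : Fin h, q (Sum.inr (Sum.inr i)) = (-1 : ℝ) ^ (i : ℕ) * q (Sum.inr (Sum.inr 0))) ∧
      ∃ c : ℝ, ∀ v, q v = c * specialVector V h v := by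
  have alt := hq.altan_eq_neg_one_pow_mul hV hx
  refine ⟨alt, -q (inr (inr 0)), ?_⟩
  rintro (u | i | j)
  · simp [specialVector, hV]
  · simp [specialVector, hx]
  · rw [alt j, specialVector, pow_succ]
    ring

/-- for even attachment size, a kernel eigenvector of the altan vanishing on
`V(G)` and all `x_i` alternates in sign on the `y_i`, hence is a scalar multiple of the
special vector. -/
theorem stmt8 {V : Type*} [Fintype V] {h : ℕ} [NeZero h] (hh : 2 ≤ h) (heven : Even h)
    (G : SimpleGraph V) (H : Fin h → V) (q : (V ⊕ (Fin h ⊕ Fin h)) → ℝ)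
    (hq : IsKernelVector (altan G H) q)
    (hV : ∀ u : V, q (Sum.inl u) = 0)
    (hx : ∀ i : Fin h, q (Sum.inr (Sum.inl i)) = 0) :
    (∀ i : Fin h, q (Sum.inr (Sum.inr i)) = (-1 : ℝ) ^ (i : ℕ) * q (Sum.inr (Sum.inr 0))) ∧
      ∃ c : ℝ, ∀ v, q v = c * specialVector V h v :=
  stmt8_general G H q hq hV hx
end

section
/- Let G be a graph, H an attachment set of even size h, and suppose every kernel eigenvector q of G satisfies Σ_{i=1}^{h} (-1)^i q(v_i) = 0. Then η(altan(G,H)) ≥ η(G) + 1. -/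
open scoped Classical

/-! ### Auxiliary definitions and lemmas -/

lemma nullity_eq {V : Type*} [Fintype V] (G : SimpleGraph V) [DecidableEq V]
    [DecidableRel G.Adj] :
    nullity G = Module.finrank ℝ ↥(LinearMap.ker (Matrix.toLin' (G.adjMatrix ℝ))) := by
  unfold nullity
  congr!

lemma mem_ker_iff' {W : Type*} [Fintype W] [DecidableEq W] (G : SimpleGraph W)
    [DecidableRel G.Adj] (f : W → ℝ) :
    f ∈ LinearMap.ker (Matrix.toLin' (G.adjMatrix ℝ)) ↔ IsKernelVector G f := by
  have hsum : ∀ w : W, ((G.adjMatrix ℝ).mulVec f) w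
      = ∑ u : W, (if G.Adj w u then f u else 0) := by
    intro w
    simp only [Matrix.mulVec, dotProduct, SimpleGraph.adjMatrix_apply, ite_mul,
      one_mul, zero_mul]
  rw [LinearMap.mem_ker, Matrix.toLin'_apply, funext_iff]
  unfold IsKernelVector
  refine forall_congr' fun w => ?_
  rw [hsum w, Pi.zero_apply]
  exact iff_of_eq (by congr!)

lemma sub1val {h : ℕ} [NeZero h] (hh : 2 ≤ h) (i : Fin h) :
    ((i - 1 : Fin h) : ℕ) = if (i : ℕ) = 0 then h - 1 else (i : ℕ) - 1 := by
  rw [Fin.sub_def]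
  have h1 : ((1 : Fin h) : ℕ) = 1 := by rw [Fin.val_one']; exact Nat.mod_eq_of_lt (by omega)
  simp only [h1, Fin.val_mk]
  have hi := i.isLt
  by_cases h0 : (i : ℕ) = 0
  · rw [if_pos h0, h0, Nat.add_zero]
    exact Nat.mod_eq_of_lt (by omega)
  · rw [if_neg h0, show h - 1 + (i : ℕ) = ((i : ℕ) - 1) + 1 * h from by omega,
      Nat.add_mul_mod_self_right]
    exact Nat.mod_eq_of_lt (by omega)

lemma powflip {h : ℕ} (heven : Even h) {j : ℕ} (hj : j ≤ h) :
    (-1 : ℝ) ^ (h - j) = (-1 : ℝ) ^ j := by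
  have h1 : (-1 : ℝ) ^ (h - j) * (-1 : ℝ) ^ j = 1 := by
    rw [← pow_add, Nat.sub_add_cancel hj]; exact Even.neg_one_pow heven
  have h2 : (-1 : ℝ) ^ j * (-1 : ℝ) ^ j = 1 := by
    rw [← pow_add]; exact Even.neg_one_pow ⟨j, rfl⟩
  calc (-1 : ℝ) ^ (h - j) = (-1 : ℝ) ^ (h - j) * ((-1 : ℝ) ^ j * (-1 : ℝ) ^ j) := by
        rw [h2, mul_one]
    _ = ((-1 : ℝ) ^ (h - j) * (-1 : ℝ) ^ j) * (-1 : ℝ) ^ j := by ring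
    _ = (-1 : ℝ) ^ j := by rw [h1, one_mul]

/-- The cumulative alternating-sum vector used for the `y`-values. -/
def bvec {V : Type*} {h : ℕ} (H : Fin h → V) (q : V → ℝ) (i : Fin h) : ℝ :=
  ∑ j : Fin h, if (j : ℕ) ≤ (i : ℕ) then (-1 : ℝ) ^ ((i : ℕ) - (j : ℕ) + 1) * q (H j) else 0

/-- The extension of a kernel vector of `G` to the altan. -/
def extVec {V : Type*} {h : ℕ} (H : Fin h → V) (q : V → ℝ) (c : ℝ) :
    (V ⊕ (Fin h ⊕ Fin h)) → ℝ
  | Sum.inl v => q v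
  | Sum.inr (Sum.inl _) => 0
  | Sum.inr (Sum.inr j) => bvec H q j + c * (-1 : ℝ) ^ ((j : ℕ) + 1)

lemma bvec_add {V : Type*} {h : ℕ} (H : Fin h → V) (q q' : V → ℝ) (i : Fin h) :
    bvec H (q + q') i = bvec H q i + bvec H q' i := by
  unfold bvec
  rw [← Finset.sum_add_distrib]
  refine Finset.sum_congr rfl fun j _ => ?_
  by_cases hj : (j : ℕ) ≤ (i : ℕ) <;> simp [hj, mul_add]

lemma bvec_smul {V : Type*} {h : ℕ} (H : Fin h → V) (a : ℝ) (q : V → ℝ) (i : Fin h) :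
    bvec H (a • q) i = a * bvec H q i := by
  unfold bvec
  rw [Finset.mul_sum]
  refine Finset.sum_congr rfl fun j _ => ?_
  by_cases hj : (j : ℕ) ≤ (i : ℕ) <;> simp [hj] <;> ring

/-- The extension, as a linear map. -/
noncomputable def Tmap {V : Type*} {h : ℕ} (H : Fin h → V) :
    ((V → ℝ) × ℝ) →ₗ[ℝ] ((V ⊕ (Fin h ⊕ Fin h)) → ℝ) where
  toFun p := extVec H p.1 p.2
  map_add' p p' := by
    funext w
    cases w with
    | inl v => simp [extVec]
    | inr s =>
      cases s with
      | inl i => simp [extVec]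
      | inr j =>
        show bvec H (p.1 + p'.1) j + (p.2 + p'.2) * (-1 : ℝ) ^ ((j : ℕ) + 1)
          = (bvec H p.1 j + p.2 * (-1 : ℝ) ^ ((j : ℕ) + 1))
            + (bvec H p'.1 j + p'.2 * (-1 : ℝ) ^ ((j : ℕ) + 1))
        rw [bvec_add]
        ring
  map_smul' a p := by
    funext w
    cases w with
    | inl v => simp [extVec]
    | inr s =>
      cases s with
      | inl i => simp [extVec]
      | inr j =>
        show bvec H (a • p.1) j + (a * p.2) * (-1 : ℝ) ^ ((j : ℕ) + 1)
          = a * (bvec H p.1 j + p.2 * (-1 : ℝ) ^ ((j : ℕ) + 1))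
        rw [bvec_smul]
        ring

lemma altan_adj {V : Type*} {h : ℕ} [NeZero h] (G : SimpleGraph V) (H : Fin h → V)
    (a b : V ⊕ (Fin h ⊕ Fin h)) :
    (altan G H).Adj a b ↔ a ≠ b ∧ (altanRel G H a b ∨ altanRel G H b a) :=
  SimpleGraph.fromRel_adj _ _ _

lemma sum_pair {α : Type*} [Fintype α] {a b : α} (hab : a ≠ b) (f : α → ℝ)
    (d : ∀ x : α, Decidable (x = a ∨ x = b)) :
    (∑ x : α, @ite _ (x = a ∨ x = b) (d x) (f x) 0) = f a + f b := by
  have key : ∀ x : α, @ite _ (x = a ∨ x = b) (d x) (f x) 0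
      = (if x = a then f x else 0) + (if x = b then f x else 0) := by
    intro x
    by_cases h1 : x = a
    · rw [if_pos (Or.inl h1), if_pos h1, if_neg (fun hb => hab (h1.symm.trans hb)), add_zero]
    · by_cases h2 : x = b
      · rw [if_pos (Or.inr h2), if_neg h1, if_pos h2, zero_add]
      · rw [if_neg (by tauto), if_neg h1, if_neg h2, add_zero]
  rw [Finset.sum_congr rfl fun x _ => key x, Finset.sum_add_distrib,
    Finset.sum_ite_eq', Finset.sum_ite_eq']
  simp

lemma spair {h : ℕ} [NeZero h] (hh : 2 ≤ h) (heven : Even h) (i : Fin h) :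
    (-1 : ℝ) ^ ((i : ℕ) + 1) + (-1 : ℝ) ^ (((i - 1 : Fin h) : ℕ) + 1) = 0 := by
  rw [sub1val hh i]
  by_cases h0 : (i : ℕ) = 0
  · rw [if_pos h0, h0, show h - 1 + 1 = h from by omega, Even.neg_one_pow heven]
    norm_num
  · rw [if_neg h0, show (i : ℕ) - 1 + 1 = (i : ℕ) from by omega, pow_succ]
    ring

lemma bpair {V : Type*} {h : ℕ} [NeZero h] (hh : 2 ≤ h) (heven : Even h)
    (H : Fin h → V) (q : V → ℝ)
    (halt : ∑ j : Fin h, (-1 : ℝ) ^ ((j : ℕ) + 1) * q (H j) = 0) (i : Fin h) :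
    bvec H q i + bvec H q (i - 1) = - q (H i) := by
  by_cases h0 : (i : ℕ) = 0
  · have hv : ((i - 1 : Fin h) : ℕ) = h - 1 := by rw [sub1val hh i, if_pos h0]
    have b1 : bvec H q i = - q (H i) := by
      unfold bvec
      have key : ∀ j : Fin h,
          (if (j : ℕ) ≤ (i : ℕ) then (-1 : ℝ) ^ ((i : ℕ) - (j : ℕ) + 1) * q (H j) else 0)
          = if j = i then -q (H j) else 0 := by
        intro j
        by_cases hj : j = i
        · subst hj; rw [if_pos le_rfl, if_pos rfl, Nat.sub_self]; norm_num
        · rw [if_neg hj, if_neg]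
          intro hle
          exact hj (Fin.ext (by omega))
      rw [Finset.sum_congr rfl fun j _ => key j, Finset.sum_ite_eq']
      simp
    have b2 : bvec H q (i - 1) = 0 := by
      unfold bvec
      rw [hv]
      have key : ∀ j : Fin h,
          (if (j : ℕ) ≤ h - 1 then (-1 : ℝ) ^ (h - 1 - (j : ℕ) + 1) * q (H j) else 0)
          = - ((-1 : ℝ) ^ ((j : ℕ) + 1) * q (H j)) := by
        intro j
        have hj := j.isLt
        rw [if_pos (by omega), show h - 1 - (j : ℕ) + 1 = h - (j : ℕ) from by omega,
          powflip heven (by omega : (j : ℕ) ≤ h), pow_succ]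
        ring
      rw [Finset.sum_congr rfl fun j _ => key j, Finset.sum_neg_distrib, halt, neg_zero]
    rw [b1, b2, add_zero]
  · have hv : ((i - 1 : Fin h) : ℕ) = (i : ℕ) - 1 := by rw [sub1val hh i, if_neg h0]
    unfold bvec
    rw [← Finset.sum_add_distrib]
    have key : ∀ j : Fin h,
        ((if (j : ℕ) ≤ (i : ℕ) then (-1 : ℝ) ^ ((i : ℕ) - (j : ℕ) + 1) * q (H j) else 0)
          + (if (j : ℕ) ≤ ((i - 1 : Fin h) : ℕ) then
              (-1 : ℝ) ^ (((i - 1 : Fin h) : ℕ) - (j : ℕ) + 1) * q (H j) else 0))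
        = if j = i then -q (H j) else 0 := by
      intro j
      rw [hv]
      by_cases hj : j = i
      · subst hj
        rw [if_pos le_rfl, if_neg (by omega), if_pos rfl, Nat.sub_self]
        norm_num
      · have hjv : (j : ℕ) ≠ (i : ℕ) := fun e => hj (Fin.ext e)
        rw [if_neg hj]
        by_cases hle : (j : ℕ) ≤ (i : ℕ)
        · rw [if_pos hle, if_pos (by omega),
            show (i : ℕ) - 1 - (j : ℕ) + 1 = (i : ℕ) - (j : ℕ) from by omega, pow_succ]
          ring
        · rw [if_neg hle, if_neg (by omega), add_zero]
    rw [Finset.sum_congr rfl fun j _ => key j, Finset.sum_ite_eq']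
    simp

lemma extVec_isKernel {V : Type*} [Fintype V] {h : ℕ} [NeZero h] (hh : 2 ≤ h)
    (heven : Even h) (G : SimpleGraph V) (H : Fin h → V) (q : V → ℝ) (c : ℝ)
    (hq : IsKernelVector G q)
    (halt : ∑ j : Fin h, (-1 : ℝ) ^ ((j : ℕ) + 1) * q (H j) = 0) :
    IsKernelVector (altan G H) (extVec H q c) := by
  intro w
  rw [Fintype.sum_sum_type, Fintype.sum_sum_type]
  cases w with
  | inl v =>
    have s1 : (∑ u : V, if (altan G H).Adj (Sum.inl v) (Sum.inl u)
        then extVec H q c (Sum.inl u) else 0) = 0 := by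
      have e : ∀ u : V, (altan G H).Adj (Sum.inl v) (Sum.inl u) ↔ G.Adj v u := by
        intro u
        rw [altan_adj]
        constructor
        · rintro ⟨-, hr | hr⟩
          · exact hr
          · exact (show G.Adj u v from hr).symm
        · intro hadj
          exact ⟨by simpa using hadj.ne, Or.inl hadj⟩
      rw [Finset.sum_congr rfl fun u _ => if_congr (e u) rfl rfl]
      exact hq v
    have s2 : (∑ i : Fin h, if (altan G H).Adj (Sum.inl v) (Sum.inr (Sum.inl i))
        then extVec H q c (Sum.inr (Sum.inl i)) else 0) = 0 := by
      refine Finset.sum_eq_zero fun i _ => ?_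
      rw [show extVec H q c (Sum.inr (Sum.inl i)) = 0 from rfl, ite_self]
    have s3 : (∑ j : Fin h, if (altan G H).Adj (Sum.inl v) (Sum.inr (Sum.inr j))
        then extVec H q c (Sum.inr (Sum.inr j)) else 0) = 0 := by
      refine Finset.sum_eq_zero fun j _ => ?_
      rw [if_neg]
      rw [altan_adj]
      rintro ⟨-, hr | hr⟩ <;> exact hr
    rw [s1, s2, s3]; ring
  | inr s =>
    cases s with
    | inl i =>
      have s1 : (∑ u : V, if (altan G H).Adj (Sum.inr (Sum.inl i)) (Sum.inl u)
          then extVec H q c (Sum.inl u) else 0) = q (H i) := by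
        have e : ∀ u : V, (altan G H).Adj (Sum.inr (Sum.inl i)) (Sum.inl u) ↔ u = H i := by
          intro u
          rw [altan_adj]
          constructor
          · rintro ⟨-, hr | hr⟩
            · exact hr.elim
            · exact hr
          · intro hu
            exact ⟨by simp, Or.inr hu⟩
        rw [Finset.sum_congr rfl fun u _ => if_congr (e u) rfl rfl, Finset.sum_ite_eq']
        simp [extVec]
      have s2 : (∑ k : Fin h, if (altan G H).Adj (Sum.inr (Sum.inl i)) (Sum.inr (Sum.inl k))
          then extVec H q c (Sum.inr (Sum.inl k)) else 0) = 0 := by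
        refine Finset.sum_eq_zero fun k _ => ?_
        rw [show extVec H q c (Sum.inr (Sum.inl k)) = 0 from rfl, ite_self]
      have s3 : (∑ j : Fin h, if (altan G H).Adj (Sum.inr (Sum.inl i)) (Sum.inr (Sum.inr j))
          then extVec H q c (Sum.inr (Sum.inr j)) else 0)
          = extVec H q c (Sum.inr (Sum.inr i)) + extVec H q c (Sum.inr (Sum.inr (i - 1))) := by
        have hne : i ≠ i - 1 := by
          intro e
          have hs := sub1val hh i
          rw [← e] at hs
          have := i.isLt
          by_cases h0 : (i : ℕ) = 0
          · rw [if_pos h0] at hs; omega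
          · rw [if_neg h0] at hs; omega
        have e : ∀ j : Fin h, (altan G H).Adj (Sum.inr (Sum.inl i)) (Sum.inr (Sum.inr j))
            ↔ (j = i ∨ j = i - 1) := by
          intro j
          rw [altan_adj]
          constructor
          · rintro ⟨-, hr | hr⟩
            · have hr' : j = i ∨ i = j + 1 := hr
              rcases hr' with h1 | h2
              · exact Or.inl h1
              · exact Or.inr (eq_sub_iff_add_eq.mpr h2.symm)
            · exact hr.elim
          · rintro (rfl | hj)
            · exact ⟨by simp, Or.inl (Or.inl rfl)⟩
            · exact ⟨by simp, Or.inl (Or.inr (eq_sub_iff_add_eq.mp hj).symm)⟩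
        rw [Finset.sum_congr rfl fun j _ => if_congr (e j) rfl rfl, sum_pair hne (fun j => extVec H q c (Sum.inr (Sum.inr j))) _]
      rw [s1, s2, s3]
      show q (H i) + (0 + ((bvec H q i + c * (-1 : ℝ) ^ ((i : ℕ) + 1))
        + (bvec H q (i - 1) + c * (-1 : ℝ) ^ (((i - 1 : Fin h) : ℕ) + 1)))) = 0
      have k1 := bpair hh heven H q halt i
      have k2 := spair (h := h) hh heven i
      linear_combination k1 + c * k2
    | inr j =>
      have s1 : (∑ u : V, if (altan G H).Adj (Sum.inr (Sum.inr j)) (Sum.inl u)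
          then extVec H q c (Sum.inl u) else 0) = 0 := by
        refine Finset.sum_eq_zero fun u _ => ?_
        rw [if_neg]
        rw [altan_adj]
        rintro ⟨-, hr | hr⟩ <;> exact hr
      have s2 : (∑ k : Fin h, if (altan G H).Adj (Sum.inr (Sum.inr j)) (Sum.inr (Sum.inl k))
          then extVec H q c (Sum.inr (Sum.inl k)) else 0) = 0 := by
        refine Finset.sum_eq_zero fun k _ => ?_
        rw [show extVec H q c (Sum.inr (Sum.inl k)) = 0 from rfl, ite_self]
      have s3 : (∑ k : Fin h, if (altan G H).Adj (Sum.inr (Sum.inr j)) (Sum.inr (Sum.inr k))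
          then extVec H q c (Sum.inr (Sum.inr k)) else 0) = 0 := by
        refine Finset.sum_eq_zero fun k _ => ?_
        rw [if_neg]
        rw [altan_adj]
        rintro ⟨-, hr | hr⟩ <;> exact hr
      rw [s1, s2, s3]; ring

/-- for even attachment size, if every kernel eigenvector of `G` has
vanishing alternating sum over the attachment set, then η(altan(G,H)) ≥ η(G) + 1. -/
theorem stmt11 {V : Type*} [Fintype V] {h : ℕ} [NeZero h] (hh : 2 ≤ h) (heven : Even h)
    (G : SimpleGraph V) (H : Fin h → V)
    (hext : ∀ q : V → ℝ, IsKernelVector G q →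
      ∑ i : Fin h, (-1 : ℝ) ^ ((i : ℕ) + 1) * q (H i) = 0) :
    nullity G + 1 ≤ nullity (altan G H) := by
  classical
  rw [nullity_eq G, nullity_eq (altan G H)]
  set K := LinearMap.ker (Matrix.toLin' (G.adjMatrix ℝ)) with hK
  set K' := LinearMap.ker (Matrix.toLin' ((altan G H).adjMatrix ℝ)) with hK'
  have hmem : ∀ p : ↥K × ℝ, (Tmap H).comp ((K.subtype).prodMap (LinearMap.id : ℝ →ₗ[ℝ] ℝ)) p ∈ K' := by
    rintro ⟨⟨q, hqK⟩, c⟩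
    have hqkv : IsKernelVector G q := (mem_ker_iff' G q).mp hqK
    exact (mem_ker_iff' (altan G H) _).mpr
      (extVec_isKernel hh heven G H q c hqkv (hext q hqkv))
  set Φ : (↥K × ℝ) →ₗ[ℝ] ↥K' :=
    LinearMap.codRestrict K' ((Tmap H).comp ((K.subtype).prodMap LinearMap.id)) hmem with hΦ
  have hinj : Function.Injective Φ := by
    rw [← LinearMap.ker_eq_bot, LinearMap.ker_eq_bot']
    rintro ⟨⟨q, hqK⟩, c⟩ h0
    have h0' : extVec H q c = 0 := congrArg Subtype.val h0
    have hq0 : q = 0 := funext fun v => congrFun h0' (Sum.inl v)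
    have hc0 : c = 0 := by
      have := congrFun h0' (Sum.inr (Sum.inr (0 : Fin h)))
      rw [show extVec H q c (Sum.inr (Sum.inr (0 : Fin h)))
        = bvec H q 0 + c * (-1 : ℝ) ^ (((0 : Fin h) : ℕ) + 1) from rfl, hq0] at this
      simp [bvec] at this
      exact this
    subst hq0 hc0
    rfl
  have hle : Module.finrank ℝ (↥K × ℝ) ≤ Module.finrank ℝ ↥K' :=
    LinearMap.finrank_le_finrank_of_injective hinj
  rw [Module.finrank_prod, Module.finrank_self] at hle
  exact hle
end

section
/- Let (G'',H'') = altan²(G,H) with |H| = h even, and let q be a kernel eigenvector of G''. Then the alternating sum D(q) = Σ_{i=1}^{h} (-1)^i q(y_i) over the middle perimeter vertices y_1,...,y_h equals 0. -/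
open scoped Classical

lemma neg_one_pow_fin_succ {h : ℕ} [NeZero h] (heven : Even h) (j : Fin h) :
    ((-1:ℝ)) ^ (((j + 1 : Fin h) : ℕ)) = -(-1) ^ ((j : ℕ)) := by
  rcases Nat.exists_eq_succ_of_ne_zero (NeZero.ne h) with ⟨n, rfl⟩
  rw [Fin.val_add_one]
  split_ifs with hj
  · subst hj
    have hn : Odd n := Nat.not_even_iff_odd.mp (Nat.even_add_one.mp heven)
    simp [Fin.last, hn.neg_one_pow]
  · rw [pow_succ]; ring

/-- for even attachment size, every kernel eigenvector of the second iterated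
altan has vanishing alternating sum `D(q) = Σ (-1)^i q(y_i)` over the middle perimeter
vertices `y_1, ..., y_h`. -/
theorem stmt15 {V : Type*} [Fintype V] {h : ℕ} [NeZero h] (hh : 2 ≤ h) (heven : Even h)
    (G : SimpleGraph V) (H : Fin h → V)
    (q : ((V ⊕ (Fin h ⊕ Fin h)) ⊕ (Fin h ⊕ Fin h)) → ℝ)
    (hq : IsKernelVector (altan (altan G H) (inducedAttachment V h)) q) :
    ∑ i : Fin h, (-1 : ℝ) ^ ((i : ℕ) + 1) * q (Sum.inl (Sum.inr (Sum.inr i))) = 0 := by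
  classical
  set A : Fin h → ℝ := fun j => q (Sum.inr (Sum.inr j)) with hA
  have hne : ∀ i : Fin h, i ≠ i - 1 := by
    intro i hcon
    have h1 : (1 : Fin h) = 0 := sub_eq_self.mp hcon.symm
    have := Fin.one_eq_zero_iff.mp h1
    omega
  have key : ∀ i : Fin h,
      q (Sum.inl (Sum.inr (Sum.inr i))) = -(A i + A (i - 1)) := by
    intro i
    have hi := hq (Sum.inr (Sum.inl i))
    rw [Fintype.sum_sum_type] at hi
    have h1 : ∀ u : V ⊕ (Fin h ⊕ Fin h),
        (if (altan (altan G H) (inducedAttachment V h)).Adj (Sum.inr (Sum.inl i)) (Sum.inl u)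
          then q (Sum.inl u) else 0)
        = if u = Sum.inr (Sum.inr i) then q (Sum.inl u) else 0 := by
      intro u
      congr 1
      simp only [altan, SimpleGraph.fromRel_adj, altanRel, inducedAttachment, eq_iff_iff]
      constructor
      · rintro ⟨-, h | h⟩
        · exact h.elim
        · exact h
      · rintro rfl
        exact ⟨by simp, Or.inr rfl⟩
    rw [Finset.sum_congr rfl (fun u _ => h1 u), Finset.sum_ite_eq' Finset.univ] at hi
    simp only [Finset.mem_univ, if_true] at hi
    rw [Fintype.sum_sum_type] at hi
    have h2 : ∀ j : Fin h,
        (if (altan (altan G H) (inducedAttachment V h)).Adj (Sum.inr (Sum.inl i))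
            (Sum.inr (Sum.inl j)) then q (Sum.inr (Sum.inl j)) else 0) = 0 := by
      intro j
      rw [if_neg]
      simp [altan, altanRel]
    have h3 : ∀ j : Fin h,
        (if (altan (altan G H) (inducedAttachment V h)).Adj (Sum.inr (Sum.inl i))
            (Sum.inr (Sum.inr j)) then q (Sum.inr (Sum.inr j)) else 0)
        = (if j = i then A j else 0) + (if j = i - 1 then A j else 0) := by
      intro j
      have hadj : (altan (altan G H) (inducedAttachment V h)).Adj (Sum.inr (Sum.inl i))
          (Sum.inr (Sum.inr j)) ↔ (j = i ∨ j = i - 1) := by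
        simp only [altan, SimpleGraph.fromRel_adj, altanRel]
        constructor
        · rintro ⟨-, (h | h) | h⟩
          · exact Or.inl h
          · exact Or.inr (eq_sub_of_add_eq h.symm)
          · exact h.elim
        · rintro (rfl | rfl)
          · exact ⟨by simp, Or.inl (Or.inl rfl)⟩
          · exact ⟨by simp, Or.inl (Or.inr (by rw [sub_add_cancel]))⟩
      by_cases hji : j = i
      · subst hji
        rw [if_pos (hadj.mpr (Or.inl rfl)), if_pos rfl, if_neg (hne j)]
        simp [hA]
      · by_cases hji' : j = i - 1
        · subst hji'
          rw [if_pos (hadj.mpr (Or.inr rfl)), if_neg hji, if_pos rfl]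
          simp [hA]
        · rw [if_neg (fun hc => by rcases hadj.mp hc with h | h <;> [exact hji h; exact hji' h]),
            if_neg hji, if_neg hji']
          ring
    rw [Finset.sum_congr rfl (fun j _ => h2 j), Finset.sum_congr rfl (fun j _ => h3 j),
      Finset.sum_add_distrib, Finset.sum_ite_eq' Finset.univ, Finset.sum_ite_eq' Finset.univ]
      at hi
    simp only [Finset.mem_univ, if_true, Finset.sum_const_zero] at hi
    linarith
  calc ∑ i : Fin h, (-1 : ℝ) ^ ((i : ℕ) + 1) * q (Sum.inl (Sum.inr (Sum.inr i)))
      = ∑ i : Fin h, ((-(-1 : ℝ) ^ ((i : ℕ) + 1) * A i)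
          + (-(-1 : ℝ) ^ ((i : ℕ) + 1) * A (i - 1))) := by
        refine Finset.sum_congr rfl fun i _ => ?_
        rw [key i]; ring
    _ = 0 := by
        rw [Finset.sum_add_distrib]
        have : ∑ i : Fin h, (-(-1 : ℝ) ^ ((i : ℕ) + 1) * A (i - 1))
            = ∑ j : Fin h, ((-1 : ℝ) ^ ((j : ℕ) + 1) * A j) := by
          rw [← Equiv.sum_comp (Equiv.addRight (1 : Fin h))]
          refine Finset.sum_congr rfl fun j _ => ?_
          simp only [Equiv.coe_addRight]
          rw [add_sub_cancel_right, pow_succ, pow_succ, neg_one_pow_fin_succ heven]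
          ring
        rw [this]
        rw [← Finset.sum_add_distrib]
        refine Finset.sum_eq_zero fun i _ => ?_
        ring
end
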